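/- arXiv:2402.15834 — 3 statements merged into one kernel-verified Lean document; each statement's English description precedes it below -/
import Mathlib

section
/- For every finite simple graph G with at least one edge, it holds that tree-α(G) ≤ 2 · tree-μ(G) · Δ(G)², where Δ(G) is the maximum degree of G. -/
open SimpleGraph

namespace Paper

/-- A tree decomposition of a graph `G`. -/
structure TreeDecomp {V : Type} (G : SimpleGraph V) where
  ι : Type
  fin : Fintype ι
  tree : SimpleGraph ι
  isTree : tree.IsTree
  bag : ι → Set V
  mem_bag : ∀ v : V, ∃ t, v ∈ bag t
  edge_bag : ∀ ⦃u w : V⦄, G.Adj u w → ∃ t, u ∈ bag t ∧ w ∈ bag t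
  coherent : ∀ v : V, (tree.induce {t | v ∈ bag t}).Connected

/-- `M` is an induced matching in `G`: a set of edges, pairwise disjoint,
with no edge of `G` joining endpoints of distinct edges of `M`. -/
def IsInducedMatching {V : Type} (G : SimpleGraph V) (M : Finset (V × V)) : Prop :=
  (∀ p ∈ M, G.Adj p.1 p.2) ∧
    ∀ p ∈ M, ∀ q ∈ M, p ≠ q →
      (p.1 ≠ q.1 ∧ p.1 ≠ q.2 ∧ p.2 ≠ q.1 ∧ p.2 ≠ q.2) ∧
      (¬ G.Adj p.1 q.1 ∧ ¬ G.Adj p.1 q.2 ∧ ¬ G.Adj p.2 q.1 ∧ ¬ G.Adj p.2 q.2)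

/-- Every edge of `M` has an endpoint in `X`. -/
def Touches {V : Type} (M : Finset (V × V)) (X : Set V) : Prop :=
  ∀ p ∈ M, p.1 ∈ X ∨ p.2 ∈ X

/-- μ(𝒯): the maximum size of an induced matching of `G` all of whose edges
touch a common bag of the tree decomposition `D`. -/
noncomputable def mu {V : Type} (G : SimpleGraph V) (D : TreeDecomp G) : ℕ :=
  sSup {n | ∃ (t : D.ι) (M : Finset (V × V)),
    IsInducedMatching G M ∧ Touches M (D.bag t) ∧ M.card = n}

/-- Induced matching treewidth: minimum of μ(𝒯) over tree decompositions. -/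
noncomputable def treeMu {V : Type} (G : SimpleGraph V) : ℕ :=
  sInf {n | ∃ D : TreeDecomp G, mu G D = n}

/-- `S` is an independent set of `G`. -/
def IsIndepSet {V : Type} (G : SimpleGraph V) (S : Finset V) : Prop :=
  ∀ u ∈ S, ∀ v ∈ S, u ≠ v → ¬ G.Adj u v

/-- α(𝒯): the maximum size of an independent set of `G` contained in a bag. -/
noncomputable def alphaTD {V : Type} (G : SimpleGraph V) (D : TreeDecomp G) : ℕ :=
  sSup {n | ∃ (t : D.ι) (S : Finset V),
    IsIndepSet G S ∧ ↑S ⊆ D.bag t ∧ S.card = n}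

/-- Tree-independence number: minimum of α(𝒯) over tree decompositions. -/
noncomputable def treeAlpha {V : Type} (G : SimpleGraph V) : ℕ :=
  sInf {n | ∃ D : TreeDecomp G, alphaTD G D = n}

/-- The `k`-th power of `G`: distinct vertices adjacent iff their distance in `G`
is at most `k` (for `k = 0` this is the edgeless graph). -/
def power {V : Type} (G : SimpleGraph V) (k : ℕ) : SimpleGraph V :=
  SimpleGraph.fromRel (fun u v => G.Reachable u v ∧ G.dist u v ≤ k)

/-- The graph `G°[ℋ]` for a family `ℋ = {H j}` of subgraphs of `G`: vertices are
indices `j`, two distinct indices adjacent iff the subgraphs share a vertex or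
there is an edge of `G` between them. -/
def blowup {V J : Type} (G : SimpleGraph V) (H : J → G.Subgraph) : SimpleGraph J :=
  SimpleGraph.fromRel (fun i j =>
    ((H i).verts ∩ (H j).verts).Nonempty ∨
      ∃ u ∈ (H i).verts, ∃ v ∈ (H j).verts, G.Adj u v)

/-!
Take a tree decomposition `D` attaining tree-μ. If `S` is a set of non-isolated vertices in a
bag, choose an induced matching `M` of maximum size among those whose edges each have their
first endpoint in `S`; these edges touch the bag. By maximality every vertex of `S` is reached
in two steps from an endpoint of some edge of `M`, and at most `2Δ²` vertices are reached in
this way from a single edge, so `|S| ≤ 2Δ² |M| ≤ 2Δ² μ(D)`. Isolated vertices are not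
controlled by μ, so they are removed from the bags and given singleton bags of their own,
pendant leaves of the tree; these have independence number `1 ≤ 2 μ(D) Δ²`.
-/

section AttachLeaves

variable {ι κ : Type*} (T : SimpleGraph ι) (t0 : ι)

/-- `T` with every element of `κ` attached to `t0` as a pendant leaf. -/
def attachLeaves : SimpleGraph (ι ⊕ κ) where
  Adj x y := match x, y with
    | .inl a, .inl b => T.Adj a b
    | .inl a, .inr _ => a = t0
    | .inr _, .inl a => a = t0
    | .inr _, .inr _ => False
  symm := ⟨by rintro (a | a) (b | b) h <;> first | exact h.symm | exact h⟩
  loopless := ⟨by rintro (a | a) h; exacts [T.irrefl h, h]⟩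

def attachLeavesInl : T →g attachLeaves (κ := κ) T t0 where
  toFun := Sum.inl
  map_rel' h := h

lemma attachLeaves_connected (hT : T.Connected) : (attachLeaves (κ := κ) T t0).Connected := by
  have reach_t0 : ∀ x : ι ⊕ κ, (attachLeaves T t0).Reachable x (.inl t0)
    | .inl a => (hT a t0).map (attachLeavesInl T t0)
    | .inr _ => Adj.reachable rfl
  have : Nonempty (ι ⊕ κ) := ⟨.inl t0⟩
  exact ⟨fun x y => (reach_t0 x).trans (reach_t0 y).symm⟩

/-- Collapsing every leaf onto `t0` turns a walk avoiding the edge `ab` of `T` into one in `T`. -/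
lemma reachable_deleteEdges_of_attachLeaves {a b : ι} {x y : ι ⊕ κ}
    (h : ((attachLeaves T t0).deleteEdges {s(.inl a, .inl b)}).Reachable x y) :
    (T.deleteEdges {s(a, b)}).Reachable (Sum.elim id (fun _ => t0) x)
      (Sum.elim id (fun _ => t0) y) := by
  rw [reachable_iff_reflTransGen] at h ⊢
  refine h.lift' _ ?_
  rintro (c | c) (d | d) ⟨hcd, hne⟩
  · refine .single ⟨hcd, fun hab => hne ?_⟩
    simp only [fromEdgeSet_adj, Set.mem_singleton_iff, Sum.elim_inl, id] at hab ⊢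
    exact ⟨by simpa using congrArg (Sym2.map (Sum.inl (β := κ))) hab.1,
      fun h => hab.2 (Sum.inl_injective h)⟩
  · exact (show c = t0 from hcd) ▸ .refl
  · exact (show d = t0 from hcd) ▸ .refl
  · exact hcd.elim

lemma not_reachable_deleteEdges_attachLeaves (k : κ) :
    ¬ ((attachLeaves T t0).deleteEdges {s(.inl t0, .inr k)}).Reachable (.inr k) (.inl t0) := by
  rintro ⟨p⟩
  cases p with
  | @cons _ z _ h _ =>
    obtain ⟨hk, hne⟩ := deleteEdges_adj.mp h
    match z, hk with
    | .inl _, rfl => exact hne (by rw [Sym2.eq_swap]; rfl)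

lemma attachLeaves_isAcyclic (hT : T.IsAcyclic) : (attachLeaves (κ := κ) T t0).IsAcyclic := by
  rw [isAcyclic_iff_forall_adj_isBridge] at hT ⊢
  rintro (a | k) (b | l) h
  · exact fun hr => isBridge_iff.mp (hT h) (reachable_deleteEdges_of_attachLeaves T t0 hr)
  · rw [show a = t0 from h, isBridge_iff]
    exact fun hr => not_reachable_deleteEdges_attachLeaves T t0 l hr.symm
  · rw [show b = t0 from h, isBridge_iff, Sym2.eq_swap]
    exact not_reachable_deleteEdges_attachLeaves T t0 k
  · exact h.elim

lemma attachLeaves_isTree (hT : T.IsTree) : (attachLeaves (κ := κ) T t0).IsTree :=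
  ⟨attachLeaves_connected T t0 hT.connected, attachLeaves_isAcyclic T t0 hT.isAcyclic⟩

end AttachLeaves

section Decompositions

variable {V : Type} (G : SimpleGraph V)

def trivialTreeDecomp : TreeDecomp G where
  ι := Unit
  fin := inferInstance
  tree := ⊥
  isTree := .of_subsingleton
  bag _ := Set.univ
  mem_bag _ := ⟨(), trivial⟩
  edge_bag _ _ _ := ⟨(), trivial, trivial⟩
  coherent v := by
    have : Nonempty {t : Unit | v ∈ Set.univ} := ⟨⟨(), trivial⟩⟩
    exact .of_subsingleton

lemma exists_mu_eq_treeMu : ∃ D : TreeDecomp G, mu G D = treeMu G :=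
  Nat.sInf_mem (s := {n | ∃ D : TreeDecomp G, mu G D = n}) ⟨_, trivialTreeDecomp G, rfl⟩

lemma treeAlpha_le_alphaTD (D : TreeDecomp G) : treeAlpha G ≤ alphaTD G D :=
  Nat.sInf_le ⟨D, rfl⟩

/-- Removes the isolated vertices from all bags of `D` and gives each of them its own bag,
a leaf attached at the node `t0`. -/
def TreeDecomp.isolatedToLeaves (D : TreeDecomp G) (t0 : D.ι) [Fintype V] : TreeDecomp G where
  ι := D.ι ⊕ V
  fin := by have := D.fin; infer_instance
  tree := attachLeaves D.tree t0
  isTree := attachLeaves_isTree _ _ D.isTree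
  bag := Sum.elim (fun t => D.bag t ∩ G.support) (fun v => {v} \ G.support)
  mem_bag v := by
    by_cases hv : v ∈ G.support
    · obtain ⟨t, ht⟩ := D.mem_bag v
      exact ⟨.inl t, ht, hv⟩
    · exact ⟨.inr v, rfl, hv⟩
  edge_bag u w huw := by
    obtain ⟨t, hu, hw⟩ := D.edge_bag huw
    exact ⟨.inl t, ⟨hu, w, huw⟩, ⟨hw, u, huw.symm⟩⟩
  coherent v := by
    by_cases hv : v ∈ G.support
    · refine (D.coherent v).map (induceHom (attachLeavesInl D.tree t0) fun t ht => ⟨ht, hv⟩) ?_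
      rintro ⟨t | w, hvt⟩
      · exact ⟨⟨t, hvt.1⟩, rfl⟩
      · exact (hvt.2 (hvt.1 ▸ hv)).elim
    · have : {n | v ∈ Sum.elim (fun t => D.bag t ∩ G.support) (fun v => {v} \ G.support) n} =
          {.inr v} := by
        ext (t | w)
        · simp [hv]
        · simp [hv, eq_comm]
      rw [this]
      exact .of_subsingleton

end Decompositions

section InducedMatchings

variable {V : Type} (G : SimpleGraph V)

/-- Literally the clause that `IsInducedMatching` imposes on two distinct edges. -/
def FarApart (p q : V × V) : Prop :=
  (p.1 ≠ q.1 ∧ p.1 ≠ q.2 ∧ p.2 ≠ q.1 ∧ p.2 ≠ q.2) ∧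
    (¬ G.Adj p.1 q.1 ∧ ¬ G.Adj p.1 q.2 ∧ ¬ G.Adj p.2 q.1 ∧ ¬ G.Adj p.2 q.2)

variable {G}

lemma FarApart.symm {p q : V × V} (h : FarApart G p q) : FarApart G q p := by
  obtain ⟨⟨h1, h2, h3, h4⟩, h5, h6, h7, h8⟩ := h
  exact ⟨⟨h1.symm, h3.symm, h2.symm, h4.symm⟩,
    fun h => h5 h.symm, fun h => h7 h.symm, fun h => h6 h.symm, fun h => h8 h.symm⟩

lemma IsInducedMatching.insert [DecidableEq V] {M : Finset (V × V)} (hM : IsInducedMatching G M)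
    {p : V × V} (hp : G.Adj p.1 p.2) (hfar : ∀ q ∈ M, FarApart G p q) :
    IsInducedMatching G (insert p M) := by
  refine ⟨fun q hq => ?_, fun q hq r hr hqr => ?_⟩
  · rcases Finset.mem_insert.mp hq with rfl | hq
    exacts [hp, hM.1 q hq]
  · rw [Finset.mem_insert] at hq hr
    rcases hq with rfl | hq <;> rcases hr with rfl | hr
    · exact (hqr rfl).elim
    · exact hfar r hr
    · exact (hfar q hq).symm
    · exact hM.2 q hq r hr hqr

lemma not_farApart_self (p : V × V) : ¬ FarApart G p p := fun h => h.1.1 rfl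

lemma card_le_mu [Fintype V] (D : TreeDecomp G) {t : D.ι} {M : Finset (V × V)}
    (hM : IsInducedMatching G M) (ht : Touches M (D.bag t)) : M.card ≤ mu G D :=
  le_csSup ⟨Fintype.card (V × V), by rintro n ⟨t, M, -, -, rfl⟩; exact M.card_le_univ⟩
    ⟨t, M, hM, ht, rfl⟩

lemma one_le_mu [Fintype V] (D : TreeDecomp G) {u v : V} (huv : G.Adj u v) : 1 ≤ mu G D := by
  classical
  obtain ⟨t, hu, -⟩ := D.edge_bag huv
  have hM : IsInducedMatching G {(u, v)} := ⟨by simpa using huv, by simp +contextual⟩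
  simpa using card_le_mu D hM (by simpa [Touches] using Or.inl hu)

end InducedMatchings

section Greedy

variable {V : Type} [Fintype V] {G : SimpleGraph V} [DecidableRel G.Adj]

variable (G) in
def twoStepNeighborFinset [DecidableEq V] (a b : V) : Finset V :=
  (G.neighborFinset a ∪ G.neighborFinset b).biUnion fun w => G.neighborFinset w

lemma mem_twoStepNeighborFinset [DecidableEq V] {a b x : V} :
    x ∈ twoStepNeighborFinset G a b ↔ ∃ w, (G.Adj a w ∨ G.Adj b w) ∧ G.Adj w x := by
  simp [twoStepNeighborFinset]

lemma card_twoStepNeighborFinset_le [DecidableEq V] (a b : V) :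
    (twoStepNeighborFinset G a b).card ≤ 2 * G.maxDegree ^ 2 :=
  calc (twoStepNeighborFinset G a b).card
      ≤ (G.neighborFinset a ∪ G.neighborFinset b).card * G.maxDegree :=
        Finset.card_biUnion_le_card_mul _ _ _ fun w _ => G.degree_le_maxDegree w
    _ ≤ (G.degree a + G.degree b) * G.maxDegree := by
        gcongr; exact Finset.card_union_le _ _
    _ ≤ (G.maxDegree + G.maxDegree) * G.maxDegree := by
        gcongr <;> exact G.degree_le_maxDegree _
    _ = 2 * G.maxDegree ^ 2 := by ring

lemma farApart_of_notMem_twoStepNeighborFinset [DecidableEq V] {p q : V × V}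
    (hp : G.Adj p.1 p.2) (hq : G.Adj q.1 q.2) (h : p.1 ∉ twoStepNeighborFinset G q.1 q.2) :
    FarApart G p q := by
  have far : ∀ w, (G.Adj q.1 w ∨ G.Adj q.2 w) → ¬ G.Adj w p.1 :=
    fun w hw hwp => h (mem_twoStepNeighborFinset.mpr ⟨w, hw, hwp⟩)
  refine ⟨⟨fun e => ?_, fun e => ?_, fun e => ?_, fun e => ?_⟩,
    fun e => far q.1 (.inr hq.symm) e.symm, fun e => far q.2 (.inl hq) e.symm,
    fun e => far p.2 (.inl e.symm) hp.symm, fun e => far p.2 (.inr e.symm) hp.symm⟩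
  · exact far q.2 (.inl hq) (by rw [e]; exact hq.symm)
  · exact far q.1 (.inr hq.symm) (by rw [e]; exact hq)
  · exact far p.2 (.inr (by rw [e]; exact hq.symm)) hp.symm
  · exact far p.2 (.inl (by rw [e]; exact hq)) hp.symm

lemma exists_isInducedMatching_card_le (S : Finset V) (hS : ∀ v ∈ S, v ∈ G.support) :
    ∃ M : Finset (V × V), IsInducedMatching G M ∧ (∀ p ∈ M, p.1 ∈ S) ∧
      S.card ≤ 2 * G.maxDegree ^ 2 * M.card := by
  classical
  obtain ⟨M, hM, hmax⟩ := Finset.exists_max_image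
    ({M | IsInducedMatching G M ∧ ∀ p ∈ M, p.1 ∈ S} : Finset (Finset (V × V))) Finset.card
    ⟨∅, by simp [IsInducedMatching]⟩
  rw [Finset.mem_filter_univ] at hM
  -- otherwise `s` and a neighbour of it would form an edge that could be added to `M`
  have hcover : S ⊆ M.biUnion fun q => twoStepNeighborFinset G q.1 q.2 := by
    intro s hs
    by_contra hnear
    simp only [Finset.mem_biUnion, not_exists, not_and] at hnear
    obtain ⟨s', hss'⟩ := hS s hs
    have hfar : ∀ q ∈ M, FarApart G (s, s') q := fun q hq =>
      farApart_of_notMem_twoStepNeighborFinset hss' (hM.1.1 q hq) (hnear q hq)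
    have hlarger := hmax (insert (s, s') M) <| (Finset.mem_filter_univ _).mpr
      ⟨hM.1.insert hss' hfar, Finset.forall_mem_insert _ _ _ |>.mpr ⟨hs, hM.2⟩⟩
    rw [Finset.card_insert_of_notMem fun h => not_farApart_self _ (hfar _ h)] at hlarger
    omega
  refine ⟨M, hM.1, hM.2, ?_⟩
  calc S.card ≤ (M.biUnion fun q => twoStepNeighborFinset G q.1 q.2).card :=
        Finset.card_le_card hcover
    _ ≤ M.card * (2 * G.maxDegree ^ 2) :=
        Finset.card_biUnion_le_card_mul _ _ _ fun q _ => card_twoStepNeighborFinset_le _ _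
    _ = 2 * G.maxDegree ^ 2 * M.card := mul_comm _ _

lemma card_le_mul_mu (D : TreeDecomp G) {t : D.ι} {S : Finset V} (hSt : ↑S ⊆ D.bag t)
    (hS : ∀ v ∈ S, v ∈ G.support) : S.card ≤ 2 * G.maxDegree ^ 2 * mu G D := by
  obtain ⟨M, hM, hMS, hcard⟩ := exists_isInducedMatching_card_le S hS
  exact hcard.trans (Nat.mul_le_mul_left _ (card_le_mu D hM fun p hp => .inl (hSt (hMS p hp))))

end Greedy

/-- for a graph with at least one edge,
tree-α(G) ≤ 2 · tree-μ(G) · Δ(G)². -/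
theorem stmt12 {V : Type} [Fintype V] (G : SimpleGraph V) [DecidableRel G.Adj]
    (hE : ∃ u v : V, G.Adj u v) :
    treeAlpha G ≤ 2 * treeMu G * G.maxDegree ^ 2 := by
  obtain ⟨u, v, huv⟩ := hE
  obtain ⟨D, hD⟩ := exists_mu_eq_treeMu G
  obtain ⟨t0, -⟩ := D.mem_bag u
  refine (treeAlpha_le_alphaTD G (D.isolatedToLeaves G t0)).trans (csSup_le' ?_)
  rintro n ⟨t | w, S, -, hSt, rfl⟩
  · calc S.card ≤ 2 * G.maxDegree ^ 2 * mu G D :=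
          card_le_mul_mu D (fun x hx => (hSt hx).1) fun x hx => (hSt hx).2
      _ = 2 * treeMu G * G.maxDegree ^ 2 := by rw [hD]; ring
  · have hΔ : 0 < G.maxDegree :=
      ((G.degree_pos_iff_exists_adj u).mpr ⟨v, huv⟩).trans_le (G.degree_le_maxDegree u)
    have hμ : 0 < treeMu G := hD ▸ one_le_mu D huv
    calc S.card ≤ 1 := Finset.card_le_one.mpr fun a ha b hb => (hSt ha).1.trans (hSt hb).1.symm
      _ ≤ 2 * treeMu G * G.maxDegree ^ 2 := Nat.mul_pos (Nat.mul_pos two_pos hμ) (pow_pos hΔ 2)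

end Paper
end

section
/- For every finite simple graph G with at least one edge, it holds that tw(G) ≤ 2 · tree-μ(G) · Δ(G)² · (Δ(G)+1), where tw(G) is the treewidth of G and Δ(G) is the maximum degree of G. -/
open SimpleGraph

namespace Paper

/-- The width of a tree decomposition: the maximum bag size minus one. -/
noncomputable def width {V : Type} (G : SimpleGraph V) (D : TreeDecomp G) : ℕ :=
  sSup {n | ∃ t : D.ι, (D.bag t).ncard = n} - 1

/-- Treewidth: the minimum width over all tree decompositions. -/
noncomputable def treewidth {V : Type} (G : SimpleGraph V) : ℕ :=
  sInf {n | ∃ D : TreeDecomp G, width G D = n}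


section TreeAux

open Sum

variable {I W : Type} (V : Type)

/-- canonical hom into `G.map f`. -/
def mapHom (f : I ↪ W) (G : SimpleGraph I) : G →g G.map f :=
  ⟨f, fun h => (SimpleGraph.map_adj f G _ _).mpr ⟨_, _, h, rfl, rfl⟩⟩

lemma mapWalk_pullback {f : I ↪ W} {G : SimpleGraph I} :
    ∀ {x y : W} (p : (G.map f).Walk x y) (a b : I) (h1 : f a = x) (h2 : f b = y),
      ∃ q : G.Walk a b, q.map (mapHom f G) = p.copy h1.symm h2.symm := by
  intro x y p
  induction p with
  | nil =>
    intro a b h1 h2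
    subst h1
    obtain rfl : a = b := f.injective h2.symm
    exact ⟨Walk.nil, by simp; rfl⟩
  | @cons x z y h p ih =>
    intro a b h1 h2
    subst h1
    obtain ⟨a', c, hadj, ha', hc'⟩ := (SimpleGraph.map_adj f G _ _).mp h
    subst hc'
    obtain rfl : a' = a := f.injective ha'
    obtain ⟨q, hq⟩ := ih c b rfl h2
    refine ⟨Walk.cons hadj q, ?_⟩
    rw [Walk.map_cons, Walk.copy_cons, hq]; rfl

/-- The embedding `inl : I ↪ I ⊕ V`. -/
def inlEmb : I ↪ I ⊕ V := ⟨Sum.inl, Sum.inl_injective⟩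

/-- `T` together with a pendant leaf for each element of `V`, all attached to `t₀`. -/
def extTree (T : SimpleGraph I) (t₀ : I) : SimpleGraph (I ⊕ V) :=
  T.map (inlEmb V) ⊔ SimpleGraph.fromRel (fun x y => x = Sum.inl t₀ ∧ ∃ v : V, y = Sum.inr v)

variable {V} {T : SimpleGraph I} {t₀ : I}

@[simp] lemma extTree_adj_inl_inl {a b : I} :
    (extTree V T t₀).Adj (inl a) (inl b) ↔ T.Adj a b := by
  simp [extTree, SimpleGraph.fromRel_adj]
  exact ⟨fun ⟨u', v', h, h1, h2⟩ => by
    obtain rfl : u' = a := Sum.inl_injective h1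
    obtain rfl : v' = b := Sum.inl_injective h2
    exact h, fun h => ⟨a, b, h, rfl, rfl⟩⟩

@[simp] lemma extTree_adj_inr {v : V} {y : I ⊕ V} :
    (extTree V T t₀).Adj (inr v) y ↔ y = inl t₀ := by
  constructor
  · rintro (h | h)
    · obtain ⟨a, b, -, h1, -⟩ := (SimpleGraph.map_adj _ _ _ _).mp h
      simp [inlEmb] at h1
    · rcases h with ⟨hne, ⟨h1, -⟩ | ⟨h1, v', hv'⟩⟩
      · simp at h1
      · exact h1
  · rintro rfl
    exact Or.inr ⟨by simp, Or.inr ⟨rfl, v, rfl⟩⟩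

lemma extTree_connected (hT : T.Connected) : (extTree V T t₀).Connected := by
  haveI : Nonempty (I ⊕ V) := ⟨inl t₀⟩
  have key : ∀ x : I ⊕ V, (extTree V T t₀).Reachable x (inl t₀) := by
    intro x
    cases x with
    | inl a =>
      have : T.Reachable a t₀ := hT.preconnected a t₀
      exact this.map ⟨Sum.inl, fun hadj => extTree_adj_inl_inl.mpr hadj⟩
    | inr v => exact (extTree_adj_inr.mpr rfl).reachable
  exact ⟨fun x y => (key x).trans (key y).symm⟩

lemma extTree_isAcyclic (hT : T.IsAcyclic) : (extTree V T t₀).IsAcyclic := by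
  classical
  intro x c hc
  have hsupp : ∀ v : V, inr v ∉ c.support := by
    intro v hv
    have key : ∀ c' : (extTree V T t₀).Walk (inr v) (inr v), ¬ c'.IsCycle := by
      intro c' hc'
      cases c' with
      | nil => exact hc'.not_of_nil
      | @cons _ z _ h p =>
        obtain rfl : z = inl t₀ := extTree_adj_inr.mp h
        rw [Walk.cons_isCycle_iff] at hc'
        obtain ⟨w, h', q, hq⟩ := Walk.exists_eq_cons_of_ne (by simp) p.reverse
        obtain rfl : w = inl t₀ := extTree_adj_inr.mp h'
        apply hc'.2
        have hmem : s(inr v, inl t₀) ∈ p.reverse.edges := by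
          rw [hq]; simp
        rwa [Walk.edges_reverse, List.mem_reverse] at hmem
    exact key _ (hc.rotate hv)
  have hedge : ∀ e ∈ c.edges, e ∈ (T.map (inlEmb V)).edgeSet := by
    intro e
    induction e using Sym2.ind with
    | _ x' y' =>
      intro he
      have hx' := Walk.fst_mem_support_of_mem_edges c he
      have hy' := Walk.snd_mem_support_of_mem_edges c he
      have hadj : (extTree V T t₀).Adj x' y' := Walk.adj_of_mem_edges c he
      cases hadj with
      | inl h => exact h
      | inr h =>
        rcases h with ⟨hne, ⟨h1, v, hv⟩ | ⟨h1, v, hv⟩⟩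
        · subst hv; exact absurd hy' (hsupp v)
        · subst hv; exact absurd hx' (hsupp v)
  have hc₂ := hc.transfer hedge
  have hx : ∃ a, x = inl a := by
    cases x with
    | inl a => exact ⟨a, rfl⟩
    | inr v => exact absurd (Walk.start_mem_support c) (hsupp v)
  obtain ⟨a, rfl⟩ := hx
  obtain ⟨q, hq⟩ := mapWalk_pullback (c.transfer _ hedge) a a rfl rfl
  change Walk.map (mapHom (inlEmb V) T) q = c.transfer _ hedge at hq
  rw [← hq] at hc₂
  exact hT q ((Walk.map_isCycle_iff_of_injective
    (fun _ _ h => Sum.inl_injective h)).mp hc₂)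

lemma extTree_isTree (hT : T.IsTree) : (extTree V T t₀).IsTree :=
  ⟨extTree_connected hT.isConnected, extTree_isAcyclic hT.IsAcyclic⟩

lemma induce_singleton_connected (H : SimpleGraph I) (x : I) :
    (H.induce {x}).Connected := by
  haveI : Nonempty ({x} : Set I) := ⟨⟨x, rfl⟩⟩
  refine ⟨fun a b => ?_⟩
  have : a = b := Subtype.ext (a.2.trans b.2.symm)
  exact this ▸ Walk.nil.reachable

lemma connected_image_inl {T : SimpleGraph I} {Tx : SimpleGraph (I ⊕ V)}
    (hadj : ∀ a b : I, T.Adj a b → Tx.Adj (inl a) (inl b))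
    {S : Set I} (hS : (T.induce S).Connected) :
    (Tx.induce (Sum.inl '' S)).Connected := by
  refine hS.map ⟨fun a => ⟨inl a.1, a.1, a.2, rfl⟩, ?_⟩ ?_
  · intro a b h
    exact hadj a.1 b.1 h
  · rintro ⟨x, hx⟩
    obtain ⟨t, ht, rfl⟩ := hx
    exact ⟨⟨t, ht⟩, rfl⟩

end TreeAux

section DecompAux

variable {V : Type} [Fintype V] (G : SimpleGraph V)

/-- A vertex with no neighbours. -/
def Isol (v : V) : Prop := ∀ w, ¬ G.Adj v w

/-- The one-node tree decomposition. -/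
def trivialDecomp : TreeDecomp G where
  ι := Unit
  fin := inferInstance
  tree := ⊥
  isTree := by
    refine ⟨?_, isAcyclic_bot⟩
    haveI : Nonempty Unit := ⟨()⟩
    exact ⟨fun a b => by cases a; cases b; exact Walk.nil.reachable⟩
  bag := fun _ => Set.univ
  mem_bag := fun v => ⟨(), trivial⟩
  edge_bag := fun u w _ => ⟨(), trivial, trivial⟩
  coherent := fun v => by
    haveI : Nonempty {t : Unit | v ∈ (Set.univ : Set V)} := ⟨⟨(), trivial⟩⟩
    refine ⟨fun a b => ?_⟩
    have hab : a = b := Subtype.ext (Subsingleton.elim _ _)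
    exact hab ▸ Walk.nil.reachable

/-- The modified tree decomposition: non-isolated vertices keep their bags,
isolated vertices are moved to pendant leaf bags. -/
noncomputable def extDecomp (D : TreeDecomp G) (t₀ : D.ι) : TreeDecomp G where
  ι := D.ι ⊕ V
  fin := by letI := D.fin; exact inferInstance
  tree := extTree V D.tree t₀
  isTree := extTree_isTree D.isTree
  bag := Sum.elim (fun t => {v | v ∈ D.bag t ∧ ¬ Isol G v}) (fun w => {v | v = w ∧ Isol G v})
  mem_bag := by
    intro v
    by_cases h : Isol G v
    · exact ⟨Sum.inr v, rfl, h⟩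
    · obtain ⟨t, ht⟩ := D.mem_bag v
      exact ⟨Sum.inl t, ht, h⟩
  edge_bag := by
    intro u w h
    obtain ⟨t, h1, h2⟩ := D.edge_bag h
    exact ⟨Sum.inl t, ⟨h1, fun hi => hi w h⟩, ⟨h2, fun hi => hi u h.symm⟩⟩
  coherent := by
    intro v
    by_cases h : Isol G v
    · have hset : {s : D.ι ⊕ V | v ∈ Sum.elim (fun t => {v | v ∈ D.bag t ∧ ¬ Isol G v})
          (fun w => {v | v = w ∧ Isol G v}) s} = {Sum.inr v} := by
        ext s
        cases s with
        | inl t => simp [h]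
        | inr w => simp [h, eq_comm]
      rw [hset]
      exact induce_singleton_connected _ _
    · have hset : {s : D.ι ⊕ V | v ∈ Sum.elim (fun t => {v | v ∈ D.bag t ∧ ¬ Isol G v})
          (fun w => {v | v = w ∧ Isol G v}) s} = Sum.inl '' {t | v ∈ D.bag t} := by
        ext s
        cases s with
        | inl t => simp [h]
        | inr w => simp [h]
      rw [hset]
      exact connected_image_inl (fun a b hab => extTree_adj_inl_inl.mpr hab) (D.coherent v)

variable [DecidableEq V] [DecidableRel G.Adj]

/-- The ball of radius 2 around `x`. -/
def ball2 (x : V) : Finset V :=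
  insert x (G.neighborFinset x ∪ (G.neighborFinset x).biUnion fun y => G.neighborFinset y \ {x})

lemma ball2_card (x : V) :
    (ball2 G x).card ≤ 1 + G.maxDegree + G.maxDegree * (G.maxDegree - 1) := by
  classical
  have hb : ((G.neighborFinset x).biUnion fun y => G.neighborFinset y \ {x}).card
      ≤ G.maxDegree * (G.maxDegree - 1) := by
    refine Finset.card_biUnion_le.trans ?_
    have hbound : ∀ y ∈ G.neighborFinset x,
        (G.neighborFinset y \ {x}).card ≤ G.maxDegree - 1 := by
      intro y hy
      have hxy : x ∈ G.neighborFinset y := by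
        rw [SimpleGraph.mem_neighborFinset] at hy ⊢
        exact hy.symm
      rw [Finset.card_sdiff_of_subset (Finset.singleton_subset_iff.mpr hxy)]
      simp only [Finset.card_singleton]
      exact Nat.sub_le_sub_right (G.degree_le_maxDegree y) 1
    refine (Finset.sum_le_card_nsmul _ _ _ hbound).trans ?_
    rw [smul_eq_mul]
    exact Nat.mul_le_mul_right _ (G.degree_le_maxDegree x)
  have hN : (G.neighborFinset x).card ≤ G.maxDegree := G.degree_le_maxDegree x
  calc (ball2 G x).card
      ≤ (G.neighborFinset x ∪
          ((G.neighborFinset x).biUnion fun y => G.neighborFinset y \ {x})).card + 1 :=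
        Finset.card_insert_le _ _
    _ ≤ ((G.neighborFinset x).card +
          ((G.neighborFinset x).biUnion fun y => G.neighborFinset y \ {x}).card) + 1 :=
        Nat.add_le_add_right (Finset.card_union_le _ _) 1
    _ ≤ 1 + G.maxDegree + G.maxDegree * (G.maxDegree - 1) := by omega

lemma mem_ball2_of {u : V} (x : V)
    (h : u = x ∨ G.Adj x u ∨ ∃ y, G.Adj x y ∧ G.Adj y u ∧ u ≠ x) : u ∈ ball2 G x := by
  rcases h with rfl | h | ⟨y, h1, h2, h3⟩
  · exact Finset.mem_insert_self _ _
  · refine Finset.mem_insert_of_mem (Finset.mem_union_left _ ?_)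
    rw [SimpleGraph.mem_neighborFinset]
    exact h
  · refine Finset.mem_insert_of_mem (Finset.mem_union_right _ (Finset.mem_biUnion.mpr
      ⟨y, ?_, Finset.mem_sdiff.mpr ⟨?_, by simpa using h3⟩⟩))
    · rw [SimpleGraph.mem_neighborFinset]; exact h1
    · rw [SimpleGraph.mem_neighborFinset]; exact h2

lemma mem_ball2_union {u w : V} (p : V × V) (huw : G.Adj u w)
    (hc : u = p.1 ∨ u = p.2 ∨ w = p.1 ∨ w = p.2 ∨
      G.Adj u p.1 ∨ G.Adj u p.2 ∨ G.Adj w p.1 ∨ G.Adj w p.2) :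
    u ∈ ball2 G p.1 ∪ ball2 G p.2 := by
  classical
  rcases hc with h | h | h | h | h | h | h | h
  · exact Finset.mem_union_left _ (mem_ball2_of G _ (Or.inl h))
  · exact Finset.mem_union_right _ (mem_ball2_of G _ (Or.inl h))
  · exact Finset.mem_union_left _ (mem_ball2_of G _ (Or.inr (Or.inl (h ▸ huw.symm))))
  · exact Finset.mem_union_right _ (mem_ball2_of G _ (Or.inr (Or.inl (h ▸ huw.symm))))
  · exact Finset.mem_union_left _ (mem_ball2_of G _ (Or.inr (Or.inl h.symm)))
  · exact Finset.mem_union_right _ (mem_ball2_of G _ (Or.inr (Or.inl h.symm)))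
  · by_cases hup : u = p.1
    · exact Finset.mem_union_left _ (mem_ball2_of G _ (Or.inl hup))
    · exact Finset.mem_union_left _ (mem_ball2_of G _ (Or.inr (Or.inr
        ⟨w, h.symm, huw.symm, hup⟩)))
  · by_cases hup : u = p.2
    · exact Finset.mem_union_right _ (mem_ball2_of G _ (Or.inl hup))
    · exact Finset.mem_union_right _ (mem_ball2_of G _ (Or.inr (Or.inr
        ⟨w, h.symm, huw.symm, hup⟩)))

lemma arith_aux (k d : ℕ) :
    2 * k * (1 + (d + 1) + (d + 1) * ((d + 1) - 1)) ≤ 2 * k * (d + 1) ^ 2 * ((d + 1) + 1) := by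
  have h1 : 1 + (d + 1) + (d + 1) * ((d + 1) - 1) ≤ (d + 1) ^ 2 * ((d + 1) + 1) := by
    simp only [Nat.add_sub_cancel]
    nlinarith
  calc 2 * k * (1 + (d + 1) + (d + 1) * ((d + 1) - 1))
      ≤ 2 * k * ((d + 1) ^ 2 * ((d + 1) + 1)) := Nat.mul_le_mul_left _ h1
    _ = 2 * k * (d + 1) ^ 2 * ((d + 1) + 1) := by ring

end DecompAux

/-- for a graph with at least one edge,
tw(G) ≤ 2 · tree-μ(G) · Δ(G)² · (Δ(G)+1). -/
theorem stmt13 {V : Type} [Fintype V] (G : SimpleGraph V) [DecidableRel G.Adj]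
    (hE : ∃ u v : V, G.Adj u v) :
    treewidth G ≤ 2 * treeMu G * G.maxDegree ^ 2 * (G.maxDegree + 1) := by
  classical
  obtain ⟨u₀, v₀, huv⟩ := hE
  have hΔ : 1 ≤ G.maxDegree := by
    have h0 : 0 < G.degree u₀ := by
      rw [G.degree_pos_iff_exists_adj]
      exact ⟨v₀, huv⟩
    exact h0.trans_le (G.degree_le_maxDegree u₀)
  -- pick a tree decomposition attaining `treeMu`
  have hsetne : {n | ∃ D : TreeDecomp G, mu G D = n}.Nonempty :=
    ⟨mu G (trivialDecomp G), trivialDecomp G, rfl⟩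
  obtain ⟨D, hD⟩ : ∃ D : TreeDecomp G, mu G D = treeMu G := Nat.sInf_mem hsetne
  have hmubdd : BddAbove {n | ∃ (t : D.ι) (M : Finset (V × V)),
      IsInducedMatching G M ∧ Touches M (D.bag t) ∧ M.card = n} := by
    refine ⟨Fintype.card (V × V), ?_⟩
    rintro n ⟨t, M, -, -, rfl⟩
    exact M.card_le_univ
  -- `treeMu G ≥ 1`
  have hmu1 : 1 ≤ treeMu G := by
    rw [← hD]
    obtain ⟨t, ht1, ht2⟩ := D.edge_bag huv
    have hmm : IsInducedMatching G ({(u₀, v₀)} : Finset (V × V)) := by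
      constructor
      · intro p hp
        rw [Finset.mem_singleton] at hp
        subst hp
        exact huv
      · intro p hp q hq hpq
        rw [Finset.mem_singleton] at hp hq
        exact absurd (hp.trans hq.symm) hpq
    have htt : Touches ({(u₀, v₀)} : Finset (V × V)) (D.bag t) := by
      intro p hp
      rw [Finset.mem_singleton] at hp
      subst hp
      exact Or.inl ht1
    have hmem : (1 : ℕ) ∈ {n | ∃ (t : D.ι) (M : Finset (V × V)),
        IsInducedMatching G M ∧ Touches M (D.bag t) ∧ M.card = n} :=
      ⟨t, {(u₀, v₀)}, hmm, htt, Finset.card_singleton _⟩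
    exact le_csSup hmubdd hmem
  -- maximal induced matchings touching each bag
  have hmax : ∀ t : D.ι, ∃ M : Finset (V × V), IsInducedMatching G M ∧
      Touches M (D.bag t) ∧ M.card ≤ treeMu G ∧
      ∀ u w, G.Adj u w → u ∈ D.bag t → ∃ p ∈ M, (u = p.1 ∨ u = p.2 ∨ w = p.1 ∨ w = p.2 ∨
        G.Adj u p.1 ∨ G.Adj u p.2 ∨ G.Adj w p.1 ∨ G.Adj w p.2) := by
    intro t
    set A := {n | ∃ M : Finset (V × V),
      IsInducedMatching G M ∧ Touches M (D.bag t) ∧ M.card = n} with hA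
    have hA0 : (0 : ℕ) ∈ A := by
      refine ⟨∅, ⟨?_, ?_⟩, ?_, Finset.card_empty⟩
      · intro p hp
        exact absurd hp (Finset.notMem_empty p)
      · intro p hp
        exact absurd hp (Finset.notMem_empty p)
      · intro p hp
        exact absurd hp (Finset.notMem_empty p)
    have hAbdd : BddAbove A := by
      refine ⟨Fintype.card (V × V), ?_⟩
      rintro n ⟨M, -, -, rfl⟩
      exact M.card_le_univ
    have hsupmem := Nat.sSup_mem ⟨0, hA0⟩ hAbdd
    obtain ⟨M, hM1, hM2, hMcard⟩ := hsupmem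
    refine ⟨M, hM1, hM2, ?_, ?_⟩
    · rw [← hD]
      exact le_csSup hmubdd ⟨t, M, hM1, hM2, rfl⟩
    · intro u w huw hu
      by_contra hcon
      push_neg at hcon
      have hmem : (u, w) ∉ M := fun hm => (hcon _ hm).1 rfl
      have hM' : IsInducedMatching G (insert (u, w) M) := by
        constructor
        · intro p hp
          rcases Finset.mem_insert.mp hp with rfl | hp
          · exact huw
          · exact hM1.1 p hp
        · intro p hp q hq hpq
          rcases Finset.mem_insert.mp hp with rfl | hp <;>
            rcases Finset.mem_insert.mp hq with rfl | hq
          · exact absurd rfl hpq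
          · obtain ⟨h1, h2, h3, h4, h5, h6, h7, h8⟩ := hcon q hq
            exact ⟨⟨h1, h2, h3, h4⟩, h5, h6, h7, h8⟩
          · obtain ⟨h1, h2, h3, h4, h5, h6, h7, h8⟩ := hcon p hp
            exact ⟨⟨h1.symm, h3.symm, h2.symm, h4.symm⟩,
              fun a => h5 a.symm, fun a => h7 a.symm, fun a => h6 a.symm, fun a => h8 a.symm⟩
          · exact hM1.2 p hp q hq hpq
      have hT' : Touches (insert (u, w) M) (D.bag t) := by
        intro p hp
        rcases Finset.mem_insert.mp hp with rfl | hp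
        · exact Or.inl hu
        · exact hM2 p hp
      have hmemA : (insert (u, w) M).card ∈ A := ⟨_, hM', hT', rfl⟩
      have hle := le_csSup hAbdd hmemA
      rw [Finset.card_insert_of_notMem hmem] at hle
      omega
  choose Mt hMt1 hMt2 hMt3 hMt4 using hmax
  letI := D.fin
  obtain ⟨t₀⟩ := D.isTree.isConnected.nonempty
  -- bound all bags of the extended decomposition
  have hbagbound : ∀ s : D.ι ⊕ V, ((extDecomp G D t₀).bag s).ncard
      ≤ 2 * treeMu G * (1 + G.maxDegree + G.maxDegree * (G.maxDegree - 1)) := by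
    intro s
    have hBpos : 1 ≤ 2 * treeMu G * (1 + G.maxDegree + G.maxDegree * (G.maxDegree - 1)) := by
      have h1 : 1 ≤ 2 * treeMu G := by omega
      have h2 : 1 ≤ 1 + G.maxDegree + G.maxDegree * (G.maxDegree - 1) := by omega
      calc (1 : ℕ) = 1 * 1 := by ring
        _ ≤ _ := Nat.mul_le_mul h1 h2
    cases s with
    | inr w =>
      have hsub : ((extDecomp G D t₀).bag (Sum.inr w)) ⊆ {w} := by
        rintro v ⟨rfl, -⟩
        rfl
      have h1 := Set.ncard_le_ncard hsub (Set.finite_singleton w)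
      rw [Set.ncard_singleton] at h1
      exact h1.trans hBpos
    | inl t =>
      have hsub : ((extDecomp G D t₀).bag (Sum.inl t)) ⊆
          ↑((Mt t).biUnion fun p => ball2 G p.1 ∪ ball2 G p.2) := by
        rintro v ⟨hv, hni⟩
        have hex : ∃ w, G.Adj v w := by
          by_contra hh
          push_neg at hh
          exact hni hh
        obtain ⟨w, hw⟩ := hex
        obtain ⟨p, hp, hcase⟩ := hMt4 t v w hw hv
        exact Finset.mem_coe.mpr (Finset.mem_biUnion.mpr
          ⟨p, hp, mem_ball2_union G p hw hcase⟩)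
      have h1 := Set.ncard_le_ncard hsub (Finset.finite_toSet _)
      rw [Set.ncard_coe_finset] at h1
      have h2 : ((Mt t).biUnion fun p => ball2 G p.1 ∪ ball2 G p.2).card
          ≤ (Mt t).card * (2 * (1 + G.maxDegree + G.maxDegree * (G.maxDegree - 1))) := by
        refine Finset.card_biUnion_le.trans ?_
        refine (Finset.sum_le_card_nsmul _ _ _ ?_).trans (le_of_eq (by rw [smul_eq_mul]))
        intro p hp
        have hb1 := ball2_card G p.1
        have hb2 := ball2_card G p.2
        have := Finset.card_union_le (ball2 G p.1) (ball2 G p.2)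
        omega
      have h3 : (Mt t).card * (2 * (1 + G.maxDegree + G.maxDegree * (G.maxDegree - 1)))
          ≤ treeMu G * (2 * (1 + G.maxDegree + G.maxDegree * (G.maxDegree - 1))) :=
        Nat.mul_le_mul_right _ (hMt3 t)
      calc ((extDecomp G D t₀).bag (Sum.inl t)).ncard
          ≤ treeMu G * (2 * (1 + G.maxDegree + G.maxDegree * (G.maxDegree - 1))) :=
            h1.trans (h2.trans h3)
        _ = 2 * treeMu G * (1 + G.maxDegree + G.maxDegree * (G.maxDegree - 1)) := by ring
  -- bound the width
  have hwidth : width G (extDecomp G D t₀)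
      ≤ 2 * treeMu G * (1 + G.maxDegree + G.maxDegree * (G.maxDegree - 1)) := by
    have hsup : sSup {n | ∃ s : (extDecomp G D t₀).ι, ((extDecomp G D t₀).bag s).ncard = n}
        ≤ 2 * treeMu G * (1 + G.maxDegree + G.maxDegree * (G.maxDegree - 1)) := by
      refine csSup_le ⟨((extDecomp G D t₀).bag (Sum.inl t₀)).ncard, Sum.inl t₀, rfl⟩ ?_
      rintro n ⟨s, rfl⟩
      exact hbagbound s
    exact le_trans (Nat.sub_le _ 1) hsup
  have htw : treewidth G ≤ width G (extDecomp G D t₀) :=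
    Nat.sInf_le ⟨extDecomp G D t₀, rfl⟩
  refine htw.trans (hwidth.trans ?_)
  obtain ⟨d, hd⟩ : ∃ d, G.maxDegree = d + 1 := ⟨G.maxDegree - 1, by omega⟩
  rw [hd]
  exact arith_aux (treeMu G) d

end Paper
end

section
/- For every positive integer n, let G_n be the graph obtained from two disjoint copies of nK₂ (the disjoint union of n copies of the single-edge graph K₂) by adding all possible edges between the two copies. Then tree-μ(G_n) ≥ n. -/
open SimpleGraph

namespace Paper

/-- The graph `G_n`: two disjoint copies of `nK₂` (indexed by `Bool`), with all
edges added between the two copies. A vertex `(c, i, e)` lies in copy `c`, in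
the `i`-th `K₂` of that copy, at endpoint `e`. -/
def Gn (n : ℕ) : SimpleGraph (Bool × Fin n × Bool) :=
  SimpleGraph.fromRel (fun p q =>
    p.1 ≠ q.1 ∨ (p.1 = q.1 ∧ p.2.1 = q.2.1 ∧ p.2.2 ≠ q.2.2))

section TreeLemmas

variable {ι : Type} {T : SimpleGraph ι}

/-- `S` is "walk-connected within itself" in `T`. -/
def ConnOn (T : SimpleGraph ι) (S : Set ι) : Prop :=
  ∀ u ∈ S, ∀ v ∈ S, ∃ w : T.Walk u v, ∀ x ∈ w.support, x ∈ S

lemma exists_adj_cross (P : ι → Prop) :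
    ∀ {x y : ι} (w : T.Walk x y), P x → ¬ P y →
    ∃ a b, T.Adj a b ∧ P a ∧ ¬ P b ∧ a ∈ w.support ∧ b ∈ w.support ∧
      ∃ w' : T.Walk b y, (∀ z ∈ w'.support, z ∈ w.support) ∧ (w.IsPath → a ∉ w'.support) := by
  intro x y w
  induction w with
  | nil => intro hx hy; exact absurd hx hy
  | @cons u u₁ v h rest ih =>
    intro hx hy
    by_cases h1 : P u₁
    · obtain ⟨a, b, hab, hPa, hPb, has, hbs, w', hw's, hw'p⟩ := ih h1 hy
      exact ⟨a, b, hab, hPa, hPb, List.Mem.tail _ has, List.Mem.tail _ hbs, w',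
        fun z hz => List.Mem.tail _ (hw's z hz), fun hp => hw'p ((Walk.cons_isPath_iff _ _).1 hp).1⟩
    · exact ⟨u, u₁, h, hx, h1, Walk.start_mem_support _, List.Mem.tail _ (Walk.start_mem_support _),
        rest, fun z hz => List.Mem.tail _ hz, fun hp => ((Walk.cons_isPath_iff _ _).1 hp).2⟩

/-- The unique path between two vertices of a tree. -/
noncomputable def tpath (hT : T.IsTree) (u v : ι) : T.Walk u v :=
  (hT.existsUnique_path u v).choose

lemma tpath_isPath (hT : T.IsTree) (u v : ι) : (tpath hT u v).IsPath :=
  (hT.existsUnique_path u v).choose_spec.1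

lemma tpath_unique (hT : T.IsTree) {u v : ι} (p : T.Walk u v) (hp : p.IsPath) :
    p = tpath hT u v :=
  (hT.existsUnique_path u v).unique hp (tpath_isPath hT u v)

lemma connOn_path_subset (hT : T.IsTree) {S : Set ι} (hS : ConnOn T S) {u v : ι}
    (hu : u ∈ S) (hv : v ∈ S) : ∀ x ∈ (tpath hT u v).support, x ∈ S := by
  classical
  obtain ⟨w, hw⟩ := hS u hu v hv
  have hb : w.bypass = tpath hT u v := tpath_unique hT _ (Walk.bypass_isPath w)
  intro x hx
  rw [← hb] at hx
  exact hw x (Walk.support_bypass_subset w hx)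

lemma tpath_symm_support (hT : T.IsTree) {x y m : ι} (h : m ∈ (tpath hT x y).support) :
    m ∈ (tpath hT y x).support := by
  have : (tpath hT x y).reverse = tpath hT y x :=
    tpath_unique hT _ ((tpath_isPath hT x y).reverse)
  rw [← this, Walk.support_reverse]
  exact List.mem_reverse.2 h

lemma tpath_cover (hT : T.IsTree) {x y z : ι} :
    ∀ m ∈ (tpath hT x y).support, m ∈ (tpath hT x z).support ∨ m ∈ (tpath hT z y).support := by
  classical
  intro m hm
  have hb : ((tpath hT x z).append (tpath hT z y)).bypass = tpath hT x y :=
    tpath_unique hT _ (Walk.bypass_isPath _)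
  rw [← hb] at hm
  have := Walk.support_bypass_subset _ hm
  exact (Walk.mem_support_append_iff _ _).1 this

lemma tree_median (hT : T.IsTree) (x y z : ι) :
    ∃ m, m ∈ (tpath hT x y).support ∧ m ∈ (tpath hT x z).support ∧
      m ∈ (tpath hT y z).support := by
  classical
  by_cases hmid : ∃ m ∈ (tpath hT x y).support,
      m ∈ (tpath hT x z).support ∧ m ∈ (tpath hT y z).support
  · obtain ⟨m, h1, h2, h3⟩ := hmid
    exact ⟨m, h1, h2, h3⟩
  · exfalso
    push_neg at hmid
    have hyQ : y ∉ (tpath hT x z).support := by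
      intro hy
      exact hmid y (Walk.end_mem_support _) hy (Walk.start_mem_support _)
    obtain ⟨a, b, hab, haQ, hbQ, has, hbs, -⟩ :=
      exists_adj_cross (· ∈ (tpath hT x z).support) (tpath hT x y)
        (Walk.start_mem_support _) hyQ
    have hbR : b ∈ (tpath hT y z).support := by
      rcases tpath_cover hT b hbs with h | h
      · exact absurd h hbQ
      · exact tpath_symm_support hT h
    have haR : a ∉ (tpath hT y z).support := fun h => hmid a has haQ h
    have hP1 : ((tpath hT x z).dropUntil a haQ) = tpath hT a z :=
      tpath_unique hT _ ((tpath_isPath hT x z).dropUntil haQ)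
    have hP2sub : ∀ w ∈ ((tpath hT y z).dropUntil b hbR).support, w ∈ (tpath hT y z).support :=
      fun w hw => Walk.support_dropUntil_subset _ hbR hw
    have hP2 : (Walk.cons hab ((tpath hT y z).dropUntil b hbR)) = tpath hT a z := by
      refine tpath_unique hT _ ?_
      rw [Walk.cons_isPath_iff]
      exact ⟨(tpath_isPath hT y z).dropUntil hbR, fun h => haR (hP2sub a h)⟩
    have hbmem : b ∈ (tpath hT a z).support := by
      rw [← hP2]
      exact List.Mem.tail _ (Walk.start_mem_support _)
    rw [← hP1] at hbmem
    exact hbQ (Walk.support_dropUntil_subset _ haQ hbmem)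

lemma connOn_inter (hT : T.IsTree) {A B : Set ι} (hA : ConnOn T A) (hB : ConnOn T B) :
    ConnOn T (A ∩ B) := by
  intro u hu v hv
  exact ⟨tpath hT u v, fun x hx =>
    ⟨connOn_path_subset hT hA hu.1 hv.1 x hx, connOn_path_subset hT hB hu.2 hv.2 x hx⟩⟩

lemma tree_h3 (hT : T.IsTree) {A B C : Set ι} (hA : ConnOn T A) (hB : ConnOn T B)
    (hC : ConnOn T C) (hAB : (A ∩ B).Nonempty) (hAC : (A ∩ C).Nonempty)
    (hBC : (B ∩ C).Nonempty) : ∃ t, t ∈ A ∧ t ∈ B ∧ t ∈ C := by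
  obtain ⟨x, hxB, hxC⟩ := hBC
  obtain ⟨y, hyA, hyC⟩ := hAC
  obtain ⟨z, hzA, hzB⟩ := hAB
  obtain ⟨m, h1, h2, h3⟩ := tree_median hT x y z
  exact ⟨m, connOn_path_subset hT hA hyA hzA m h3,
    connOn_path_subset hT hB hxB hzB m h2,
    connOn_path_subset hT hC hxC hyC m h1⟩

lemma tree_helly (hT : T.IsTree) : ∀ (n : ℕ) (A : Fin (n + 1) → Set ι),
    (∀ i, ConnOn T (A i)) → (∀ i j, (A i ∩ A j).Nonempty) → ∃ t, ∀ i, t ∈ A i := by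
  intro n
  induction n with
  | zero =>
    intro A hconn hpair
    obtain ⟨t, ht, -⟩ := hpair 0 0
    refine ⟨t, fun i => ?_⟩
    have : i = 0 := Fin.ext (by omega)
    rwa [this]
  | succ n ih =>
    intro A hconn hpair
    set B : Fin (n + 1) → Set ι := fun i => A i.castSucc ∩ A (Fin.last (n + 1)) with hBdef
    have hBconn : ∀ i, ConnOn T (B i) := fun i =>
      connOn_inter hT (hconn i.castSucc) (hconn (Fin.last (n + 1)))
    have hBpair : ∀ i j, (B i ∩ B j).Nonempty := by
      intro i j
      obtain ⟨t, h1, h2, h3⟩ := tree_h3 hT (hconn i.castSucc) (hconn j.castSucc)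
        (hconn (Fin.last (n + 1))) (hpair i.castSucc j.castSucc)
        (hpair i.castSucc (Fin.last (n + 1))) (hpair j.castSucc (Fin.last (n + 1)))
      exact ⟨t, ⟨h1, h3⟩, ⟨h2, h3⟩⟩
    obtain ⟨t, ht⟩ := ih B hBconn hBpair
    refine ⟨t, fun i => ?_⟩
    exact Fin.lastCases (motive := fun i => t ∈ A i) ((ht 0).2) (fun j => (ht j).1) i

lemma tree_separated (hT : T.IsTree) {A A' : Set ι} (hA : ConnOn T A) (hA' : ConnOn T A')
    (hdisj : A ∩ A' = ∅) {a a' : ι} (ha : a ∈ A) (ha' : a' ∈ A') :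
    ∃ u, ∀ B : Set ι, ConnOn T B → (A ∩ B).Nonempty → (A' ∩ B).Nonempty → u ∈ B := by
  classical
  have hdisj' : ∀ z, z ∈ A → z ∈ A' → False := by
    intro z h1 h2
    have hz : z ∈ A ∩ A' := ⟨h1, h2⟩
    rw [hdisj] at hz
    exact hz
  have ha'A : a' ∉ A := fun h => hdisj' a' h ha'
  obtain ⟨u, v, huv, huA, hvA, -, -, w', hw's, hw'p⟩ :=
    exists_adj_cross (· ∈ A) (tpath hT a a') ha ha'A
  have huW : u ∉ w'.support := hw'p (tpath_isPath hT a a')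
  set T' := T.deleteEdges {s(u, v)} with hT'def
  have hbridge : ¬ T'.Reachable u v := by
    have hb := (isAcyclic_iff_forall_adj_isBridge.mp hT.2) huv
    rw [isBridge_iff] at hb
    exact hb
  set X : ι → Prop := fun z => T'.Reachable u z with hXdef
  have walk_to_T' : ∀ {p q : ι} (w : T.Walk p q), (u ∉ w.support ∨ v ∉ w.support) →
      T'.Reachable p q := by
    intro p q w hw
    refine ⟨w.toDeleteEdges _ ?_⟩
    intro e he heq
    rw [Set.mem_singleton_iff] at heq
    subst heq
    rcases hw with h | h
    · exact h (Walk.fst_mem_support_of_mem_edges w he)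
    · exact h (Walk.snd_mem_support_of_mem_edges w he)
  have hXA : ∀ z ∈ A, X z := by
    intro z hz
    obtain ⟨w, hw⟩ := hA u huA z hz
    exact walk_to_T' w (Or.inr fun h => hvA (hw v h))
  have hXu : X u := Reachable.refl u
  have hXv : ¬ X v := hbridge
  have hva' : T'.Reachable v a' := walk_to_T' w' (Or.inl huW)
  have hXa' : ¬ X a' := fun h => hbridge (h.trans hva'.symm)
  have hXA' : ∀ z ∈ A', ¬ X z := by
    intro z hz h
    obtain ⟨w, hw⟩ := hA' a' ha' z hz
    have hr : T'.Reachable a' z := walk_to_T' w (Or.inl fun h => hdisj' u huA (hw u h))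
    exact hXa' (h.trans hr.symm)
  refine ⟨u, ?_⟩
  intro B hB hAB hA'B
  obtain ⟨p, hpA, hpB⟩ := hAB
  obtain ⟨q, hqA', hqB⟩ := hA'B
  obtain ⟨w, hw⟩ := hB p hpB q hqB
  obtain ⟨c, d, hcd, hXc, hXd, hcs, hds, -⟩ :=
    exists_adj_cross X w (hXA p hpA) (hXA' q hqA')
  have hedge : s(c, d) = s(u, v) := by
    by_contra hne
    exact hXd (hXc.trans ⟨Walk.cons (by simp [hT'def, hcd, hne]) Walk.nil⟩)
  rw [Sym2.eq_iff] at hedge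
  rcases hedge with ⟨hc, hd⟩ | ⟨hc, hd⟩
  · rw [← hc]; exact hw c hcs
  · exact absurd (hc ▸ hXc) hXv

lemma tree_bipartite (hT : T.IsTree) {n : ℕ} (hn : 0 < n) (A B : Fin n → Set ι)
    (hAconn : ∀ i, ConnOn T (A i)) (hBconn : ∀ j, ConnOn T (B j))
    (hcross : ∀ i j, (A i ∩ B j).Nonempty) :
    (∃ t, ∀ i, t ∈ A i) ∨ (∃ t, ∀ j, t ∈ B j) := by
  obtain ⟨m, rfl⟩ : ∃ m, n = m + 1 := ⟨n - 1, (Nat.succ_pred_eq_of_pos hn).symm⟩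
  by_cases hp : ∀ i j, (A i ∩ A j).Nonempty
  · exact Or.inl (tree_helly hT m A hAconn hp)
  · push_neg at hp
    obtain ⟨i, j, hij⟩ := hp
    obtain ⟨a, ha, -⟩ := hcross i 0
    obtain ⟨a', ha', -⟩ := hcross j 0
    obtain ⟨u, hu⟩ := tree_separated hT (hAconn i) (hAconn j) hij ha ha'
    refine Or.inr ⟨u, fun k => ?_⟩
    exact hu (B k) (hBconn k) (hcross i k) (hcross j k)

end TreeLemmas

section TreeLemmas2

variable {ι : Type} {T : SimpleGraph ι}

lemma connOn_union {S1 S2 : Set ι} (h1 : ConnOn T S1) (h2 : ConnOn T S2) {t0 : ι}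
    (ht1 : t0 ∈ S1) (ht2 : t0 ∈ S2) : ConnOn T (S1 ∪ S2) := by
  have key : ∀ u ∈ S1 ∪ S2, ∃ w : T.Walk u t0, ∀ x ∈ w.support, x ∈ S1 ∪ S2 := by
    intro u hu
    rcases hu with hu | hu
    · obtain ⟨w, hw⟩ := h1 u hu t0 ht1; exact ⟨w, fun x hx => Or.inl (hw x hx)⟩
    · obtain ⟨w, hw⟩ := h2 u hu t0 ht2; exact ⟨w, fun x hx => Or.inr (hw x hx)⟩
  intro u hu v hv
  obtain ⟨w1, hw1⟩ := key u hu
  obtain ⟨w2, hw2⟩ := key v hv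
  refine ⟨w1.append w2.reverse, fun x hx => ?_⟩
  rcases (Walk.mem_support_append_iff _ _).1 hx with h | h
  · exact hw1 x h
  · rw [Walk.support_reverse] at h; exact hw2 x (List.mem_reverse.1 h)

end TreeLemmas2

section Apply

lemma connOn_bag {V : Type} {G : SimpleGraph V} (D : TreeDecomp G) (v : V) :
    ConnOn D.tree {t | v ∈ D.bag t} := by
  intro t1 h1 t2 h2
  obtain ⟨p⟩ := (D.coherent v).preconnected ⟨t1, h1⟩ ⟨t2, h2⟩
  let F : D.tree.induce {t | v ∈ D.bag t} →g D.tree := ⟨Subtype.val, fun {a b} hab => hab⟩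
  refine ⟨p.map F, ?_⟩
  intro x hx
  rw [Walk.support_map] at hx
  obtain ⟨s, hs, rfl⟩ := List.mem_map.1 hx
  exact s.2

lemma gn_adj_same (n : ℕ) (c : Bool) (i : Fin n) :
    (Gn n).Adj (c, i, false) (c, i, true) := by
  refine (SimpleGraph.fromRel_adj _ _ _).2 ⟨?_, Or.inl (Or.inr ⟨rfl, rfl, by simp⟩)⟩
  simp

lemma gn_adj_cross (n : ℕ) {c c' : Bool} (h : c ≠ c') (i j : Fin n) (e e' : Bool) :
    (Gn n).Adj (c, i, e) (c', j, e') := by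
  refine (SimpleGraph.fromRel_adj _ _ _).2 ⟨?_, Or.inl (Or.inl h)⟩
  exact fun hq => h (congrArg Prod.fst hq)

lemma gn_not_adj (n : ℕ) {c : Bool} {i j : Fin n} (hij : i ≠ j) (e e' : Bool) :
    ¬ (Gn n).Adj (c, i, e) (c, j, e') := by
  intro h
  rw [Gn, SimpleGraph.fromRel_adj] at h
  rcases h.2 with h' | h'
  · rcases h' with h' | ⟨-, h', -⟩
    · exact h' rfl
    · exact hij h'
  · rcases h' with h' | ⟨-, h', -⟩
    · exact h' rfl
    · exact hij h'.symm

/-- The perfect matching inside copy `c`. -/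
def stdMatch (n : ℕ) (c : Bool) : Finset ((Bool × Fin n × Bool) × (Bool × Fin n × Bool)) :=
  Finset.univ.image fun i : Fin n => ((c, i, false), (c, i, true))

lemma stdMatch_card (n : ℕ) (c : Bool) : (stdMatch n c).card = n := by
  rw [stdMatch, Finset.card_image_of_injective _
    (fun i j h => by simpa using congrArg (fun p => p.1.2.1) h),
    Finset.card_univ, Fintype.card_fin]

lemma stdMatch_isInduced (n : ℕ) (c : Bool) : IsInducedMatching (Gn n) (stdMatch n c) := by
  constructor
  · intro p hp
    obtain ⟨i, -, rfl⟩ := Finset.mem_image.1 hp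
    exact gn_adj_same n c i
  · intro p hp q hq hpq
    obtain ⟨i, -, rfl⟩ := Finset.mem_image.1 hp
    obtain ⟨j, -, rfl⟩ := Finset.mem_image.1 hq
    have hij : i ≠ j := fun h => hpq (by rw [h])
    have hne : ∀ e e' : Bool, ((c, i, e) : Bool × Fin n × Bool) ≠ (c, j, e') :=
      fun e e' h => hij (congrArg (fun x => x.2.1) h)
    exact ⟨⟨hne _ _, hne _ _, hne _ _, hne _ _⟩,
      gn_not_adj n hij _ _, gn_not_adj n hij _ _, gn_not_adj n hij _ _, gn_not_adj n hij _ _⟩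

lemma n_le_mu (n : ℕ) (hn : 0 < n) (D : TreeDecomp (Gn n)) : n ≤ mu (Gn n) D := by
  classical
  set A : Bool → Fin n → Set D.ι := fun c i =>
    {t | (c, i, false) ∈ D.bag t} ∪ {t | (c, i, true) ∈ D.bag t} with hAdef
  have hconn : ∀ c i, ConnOn D.tree (A c i) := by
    intro c i
    obtain ⟨t0, h0, h1⟩ := D.edge_bag (gn_adj_same n c i)
    exact connOn_union (connOn_bag D _) (connOn_bag D _) h0 h1
  have hcross : ∀ i j, (A false i ∩ A true j).Nonempty := by
    intro i j
    obtain ⟨t0, h0, h1⟩ := D.edge_bag (gn_adj_cross n (c := false) (c' := true) (by simp) i j false false)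
    exact ⟨t0, Or.inl h0, Or.inl h1⟩
  have key : ∃ c t, ∀ i, t ∈ A c i := by
    rcases tree_bipartite D.isTree hn (A false) (A true) (hconn false) (hconn true) hcross with
      ⟨t, ht⟩ | ⟨t, ht⟩
    exacts [⟨false, t, ht⟩, ⟨true, t, ht⟩]
  obtain ⟨c, t, ht⟩ := key
  have hmem : n ∈ {m | ∃ (t : D.ι) (M : Finset ((Bool × Fin n × Bool) × (Bool × Fin n × Bool))),
      IsInducedMatching (Gn n) M ∧ Touches M (D.bag t) ∧ M.card = m} := by
    refine ⟨t, stdMatch n c, stdMatch_isInduced n c, ?_, stdMatch_card n c⟩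
    intro p hp
    obtain ⟨i, -, rfl⟩ := Finset.mem_image.1 hp
    rcases ht i with h | h
    · exact Or.inl h
    · exact Or.inr h
  have hbdd : BddAbove {m | ∃ (t : D.ι)
      (M : Finset ((Bool × Fin n × Bool) × (Bool × Fin n × Bool))),
      IsInducedMatching (Gn n) M ∧ Touches M (D.bag t) ∧ M.card = m} := by
    refine ⟨Fintype.card ((Bool × Fin n × Bool) × (Bool × Fin n × Bool)), ?_⟩
    rintro m ⟨t, M, -, -, rfl⟩
    exact (Finset.card_le_univ M).trans_eq Finset.card_univ
  exact le_csSup hbdd hmem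

/-- The trivial one-bag tree decomposition. -/
noncomputable def trivDecomp {V : Type} (G : SimpleGraph V) : TreeDecomp G where
  ι := Unit
  fin := inferInstance
  tree := ⊥
  isTree := by
    constructor
    · rw [connected_iff]
      refine ⟨fun u v => ?_, ⟨()⟩⟩
      rw [Subsingleton.elim u v]
    · intro v c hc
      cases c with
      | nil => exact hc.ne_nil rfl
      | cons h _ => exact h.elim
  bag := fun _ => Set.univ
  mem_bag := fun v => ⟨(), trivial⟩
  edge_bag := fun u w _ => ⟨(), trivial, trivial⟩
  coherent := by
    intro v
    rw [connected_iff]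
    refine ⟨fun a b => ?_, ⟨⟨(), trivial⟩⟩⟩
    rw [Subsingleton.elim a b]

end Apply

/-- tree-μ(G_n) ≥ n. -/
theorem stmt15 (n : ℕ) (hn : 0 < n) : n ≤ treeMu (Gn n) := by
  refine le_csInf ⟨mu (Gn n) (trivDecomp (Gn n)), trivDecomp (Gn n), rfl⟩ ?_
  rintro m ⟨D, rfl⟩
  exact n_le_mu n hn D

end Paper
end
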